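/- arXiv:2510.06837 — 6 statements merged into one kernel-verified Lean document; each statement's English description precedes it below -/
import Mathlib

section
/- For all a ∈ [−1, 1], the matrix identity W(a) = i · e^{−iπZ/4} R(a) e^{−iπZ/4} holds. Consequently, for every d ≥ 1 and every phase sequence φ' ∈ ℝ^{d+1}, defining φ ∈ ℝ^{d+1} by φ₀ = φ'₀ − π/4, φ_k = φ'_k − π/2 for 1 ≤ k ≤ d−1, and φ_d = φ'_d − π/4, one has for all a ∈ [−1, 1]: e^{iφ'₀Z} ∏_{k=1}^{d} (W(a) e^{iφ'_kZ}) = i^d · e^{iφ₀Z} ∏_{k=1}^{d} (R(a) e^{iφ_kZ}). -/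
open Matrix

/-- The QSP signal matrix `W(a) = [[a, i√(1-a²)], [i√(1-a²), a]]`. -/
noncomputable def qspW (a : ℝ) : Matrix (Fin 2) (Fin 2) ℂ :=
  !![(a : ℂ), Complex.I * Real.sqrt (1 - a ^ 2);
     Complex.I * Real.sqrt (1 - a ^ 2), (a : ℂ)]

/-- The reflection matrix `R(a) = [[a, √(1-a²)], [√(1-a²), -a]]`. -/
noncomputable def qspR (a : ℝ) : Matrix (Fin 2) (Fin 2) ℂ :=
  !![(a : ℂ), (Real.sqrt (1 - a ^ 2) : ℝ);
     ((Real.sqrt (1 - a ^ 2) : ℝ) : ℂ), -(a : ℂ)]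

/-- The phase matrix `e^{iφZ} = diag(e^{iφ}, e^{-iφ})`. -/
noncomputable def phaseZ (φ : ℝ) : Matrix (Fin 2) (Fin 2) ℂ :=
  !![Complex.exp (Complex.I * φ), 0;
     0, Complex.exp (-(Complex.I * φ))]

lemma phaseZ_mul (x y : ℝ) : phaseZ x * phaseZ y = phaseZ (x + y) := by
  simp only [phaseZ, Matrix.mul_fin_two, ← Complex.exp_add, mul_zero, zero_mul,
    add_zero, zero_add]
  congr 2 <;> push_cast <;> ring_nf

lemma phaseZ_zero : phaseZ 0 = 1 := by
  simp [phaseZ]; exact (Matrix.one_fin_two).symm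

lemma exp_pi_div_two_mul_I' : Complex.exp (↑Real.pi / 2 * Complex.I) = Complex.I := by
  rw [Complex.exp_mul_I]
  rw [show ((Real.pi:ℂ)/2) = ((Real.pi/2 : ℝ):ℂ) by push_cast; ring,
      ← Complex.ofReal_cos, ← Complex.ofReal_sin]
  simp

lemma qspW_eq (a : ℝ) :
    qspW a = Complex.I • (phaseZ (-(Real.pi / 4)) * qspR a * phaseZ (-(Real.pi / 4))) := by
  have h2 : Complex.exp (Complex.I * ↑Real.pi * (1/4)) ^ 2 = Complex.I := by
    rw [← Complex.exp_nat_mul,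
      show ((2:ℕ):ℂ) * (Complex.I * ↑Real.pi * (1/4)) = ↑Real.pi/2*Complex.I by push_cast; ring,
      exp_pi_div_two_mul_I']
  have h1 : Complex.exp (Complex.I * ↑Real.pi * (-1/4)) ^ 2 = -Complex.I := by
    rw [← Complex.exp_nat_mul,
      show ((2:ℕ):ℂ) * (Complex.I * ↑Real.pi * (-1/4)) = -(↑Real.pi/2*Complex.I) by push_cast; ring,
      Complex.exp_neg, exp_pi_div_two_mul_I', Complex.inv_I]
  have h3 : Complex.exp (Complex.I * ↑Real.pi * (-1/4)) * Complex.exp (Complex.I * ↑Real.pi * (1/4)) = 1 := by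
    rw [← Complex.exp_add]; norm_num
  ext i j
  fin_cases i <;> fin_cases j <;>
    simp [qspW, qspR, phaseZ, Matrix.mul_apply, Fin.sum_univ_succ] <;>
    ring_nf
  · rw [h1]; simp [Complex.I_mul_I]
  · rw [show Complex.exp (Complex.I * ↑Real.pi * (-1 / 4)) * ↑(√(1 - a ^ 2)) * Complex.exp (Complex.I * ↑Real.pi * (1 / 4)) = (Complex.exp (Complex.I * ↑Real.pi * (-1/4)) * Complex.exp (Complex.I * ↑Real.pi * (1/4))) * ↑(√(1 - a ^ 2)) by ring, h3]; ring
  · rw [show Complex.exp (Complex.I * ↑Real.pi * (1 / 4)) * ↑(√(1 - a ^ 2)) * Complex.exp (Complex.I * ↑Real.pi * (-1 / 4)) = (Complex.exp (Complex.I * ↑Real.pi * (-1/4)) * Complex.exp (Complex.I * ↑Real.pi * (1/4))) * ↑(√(1 - a ^ 2)) by ring, h3]; ring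
  · rw [h2]; simp [Complex.I_mul_I]

lemma qsp_key (M : Matrix (Fin 2) (Fin 2) ℂ) : ∀ (n : ℕ) (ψ : Fin n → ℝ),
    (List.ofFn fun k : Fin n =>
        (Complex.I • (phaseZ (-(Real.pi/4)) * M * phaseZ (-(Real.pi/4)))) * phaseZ (ψ k)).prod
    = Complex.I ^ n • (phaseZ (-(Real.pi/4)) *
        (List.ofFn fun k : Fin n => M * phaseZ (ψ k - Real.pi/2)).prod * phaseZ (Real.pi/4)) := by
  intro n
  induction n with
  | zero =>
    intro ψ
    simp [phaseZ_mul, ← phaseZ_zero]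
  | succ n ih =>
    intro ψ
    have hmid : ∀ X : Matrix (Fin 2) (Fin 2) ℂ,
        phaseZ (-(Real.pi/4)) * (phaseZ (ψ 0) * (phaseZ (-(Real.pi/4)) * X))
          = phaseZ (ψ 0 - Real.pi/2) * X := by
      intro X
      rw [← mul_assoc, ← mul_assoc, phaseZ_mul, phaseZ_mul,
        show -(Real.pi/4) + ψ 0 + -(Real.pi/4) = ψ 0 - Real.pi/2 by ring]
    rw [List.ofFn_succ, List.ofFn_succ, List.prod_cons, List.prod_cons, ih fun k => ψ k.succ]
    simp only [smul_mul_assoc, mul_smul_comm, smul_smul]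
    rw [pow_succ]
    refine congrArg (fun X : Matrix (Fin 2) (Fin 2) ℂ => (Complex.I ^ n * Complex.I) • X) ?_
    simp only [Matrix.mul_assoc]
    rw [hmid]

set_option maxHeartbeats 1000000

/-- Conversion between the `W_X` convention and the reflection convention of QSP:
`W(a) = i e^{-iπZ/4} R(a) e^{-iπZ/4}` for all `a ∈ [-1,1]`, and consequently, shifting
the phases by `φ₀ = φ'₀ - π/4`, `φ_k = φ'_k - π/2` (for `1 ≤ k ≤ d-1`), `φ_d = φ'_d - π/4`
turns the `W_X`-convention QSP sequence into `i^d` times the reflection-convention one. -/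
theorem wx_to_reflection_convention :
    (∀ a ∈ Set.Icc (-1 : ℝ) 1,
      qspW a = Complex.I • (phaseZ (-(Real.pi / 4)) * qspR a * phaseZ (-(Real.pi / 4)))) ∧
    (∀ d : ℕ, 1 ≤ d → ∀ φ' : Fin (d + 1) → ℝ,
      ∀ φ : Fin (d + 1) → ℝ,
      (φ 0 = φ' 0 - Real.pi / 4) →
      (∀ k : Fin (d + 1), 1 ≤ (k : ℕ) → (k : ℕ) ≤ d - 1 → φ k = φ' k - Real.pi / 2) →
      (φ (Fin.last d) = φ' (Fin.last d) - Real.pi / 4) →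
      ∀ a ∈ Set.Icc (-1 : ℝ) 1,
        phaseZ (φ' 0) * (List.ofFn fun k : Fin d => qspW a * phaseZ (φ' k.succ)).prod =
          (Complex.I ^ d) •
            (phaseZ (φ 0) * (List.ofFn fun k : Fin d => qspR a * phaseZ (φ k.succ)).prod)) := by
  constructor
  · intro a _
    exact qspW_eq a
  · intro d hd φ' φ h0 hmid hlast a _
    obtain ⟨m, rfl⟩ : ∃ m, d = m + 1 := ⟨d - 1, (Nat.succ_pred_eq_of_pos hd).symm⟩
    simp only [qspW_eq a]
    rw [qsp_key (qspR a) (m+1) (fun k => φ' k.succ)]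
    rw [mul_smul_comm]
    refine congrArg (fun X : Matrix (Fin 2) (Fin 2) ℂ => (Complex.I ^ (m+1)) • X) ?_
    -- it remains to match the phase-shifted products
    have hprod :
        (List.ofFn fun k : Fin (m+1) => qspR a * phaseZ (φ' k.succ - Real.pi/2)).prod
            * phaseZ (Real.pi/4)
          = (List.ofFn fun k : Fin (m+1) => qspR a * phaseZ (φ k.succ)).prod := by
      rw [List.ofFn_succ' (fun k : Fin (m+1) => qspR a * phaseZ (φ' k.succ - Real.pi/2)),
          List.ofFn_succ' (fun k : Fin (m+1) => qspR a * phaseZ (φ k.succ)),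
          List.prod_concat, List.prod_concat, Matrix.mul_assoc, Matrix.mul_assoc,
          phaseZ_mul]
      congr 1
      · refine congrArg List.prod (congrArg List.ofFn (funext fun i => ?_))
        have h := hmid (i.castSucc.succ) (by simp) (by simp)
        rw [h]
      · rw [Fin.succ_last, hlast]
        congr 1
        ring
    rw [← hprod]
    rw [show phaseZ (φ 0) = phaseZ (φ' 0) * phaseZ (-(Real.pi/4)) by
      rw [phaseZ_mul, h0, sub_eq_add_neg]]
    simp only [Matrix.mul_assoc]
end

section
/- Let κ > 1 and ε ∈ (0, 1), and let b be a natural number with b ≥ κ² · log(κ/ε). Then for every real x with 1/κ ≤ |x| ≤ 1, the function f(x) = (1 − (1 − x²)^b)/x satisfies |f(x) − 1/x| ≤ ε. -/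
/-- For `κ > 1`, `ε ∈ (0,1)` and a natural number `b ≥ κ² log(κ/ε)`, the function
`f(x) = (1 - (1 - x²)^b)/x` is an `ε`-approximation of `1/x` on `[-1,1] \ (-1/κ, 1/κ)`. -/
theorem inverse_function_approx (κ ε : ℝ) (hκ : 1 < κ) (hε : ε ∈ Set.Ioo (0 : ℝ) 1)
    (b : ℕ) (hb : κ ^ 2 * Real.log (κ / ε) ≤ (b : ℝ)) :
    ∀ x : ℝ, 1 / κ ≤ |x| → |x| ≤ 1 →
      |(1 - (1 - x ^ 2) ^ b) / x - 1 / x| ≤ ε := by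
  intro x hx1 hx2
  have hκ0 : 0 < κ := lt_trans one_pos hκ
  have hε0 : 0 < ε := hε.1
  have hxpos : 0 < |x| := lt_of_lt_of_le (by positivity) hx1
  have hx0 : x ≠ 0 := fun h => by simp [h] at hxpos
  have hxsq_lo : 1 / κ ^ 2 ≤ x ^ 2 := by
    have := mul_self_le_mul_self (by positivity : (0:ℝ) ≤ 1/κ) hx1
    calc 1 / κ ^ 2 = (1/κ) * (1/κ) := by ring
    _ ≤ |x| * |x| := this
    _ = x ^ 2 := by rw [← abs_mul, ← sq, abs_sq]
  have hxsq_hi : x ^ 2 ≤ 1 := by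
    have := mul_self_le_mul_self (abs_nonneg x) hx2
    calc x ^ 2 = |x| * |x| := by rw [← abs_mul, ← sq, abs_sq]
    _ ≤ 1 * 1 := this
    _ = 1 := by ring
  have key : |(1 - (1 - x ^ 2) ^ b) / x - 1 / x| = (1 - x ^ 2) ^ b / |x| := by
    rw [div_sub_div_same, abs_div]
    congr 1
    have h1 : (0:ℝ) ≤ 1 - x ^ 2 := by linarith
    rw [show 1 - (1 - x ^ 2) ^ b - 1 = -((1 - x ^ 2) ^ b) by ring, abs_neg,
      abs_of_nonneg (pow_nonneg h1 b)]
  rw [key]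
  have hbase : (0:ℝ) ≤ 1 - 1 / κ ^ 2 := by
    have : 1 / κ ^ 2 ≤ 1 := by
      rw [div_le_one (by positivity)]
      nlinarith
    linarith
  have step1 : (1 - x ^ 2) ^ b ≤ (1 - 1 / κ ^ 2) ^ b :=
    pow_le_pow_left₀ (by linarith) (by linarith) b
  have step2 : (1 - 1 / κ ^ 2) ^ b ≤ Real.exp (-(b / κ ^ 2)) := by
    have h1 : 1 - 1 / κ ^ 2 ≤ Real.exp (-(1 / κ ^ 2)) := by
      have := Real.add_one_le_exp (-(1 / κ ^ 2))
      linarith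
    calc (1 - 1 / κ ^ 2) ^ b ≤ Real.exp (-(1 / κ ^ 2)) ^ b :=
          pow_le_pow_left₀ hbase h1 b
    _ = Real.exp (-(b / κ ^ 2)) := by
        rw [← Real.exp_nat_mul]; ring_nf
  have step3 : Real.exp (-(b / κ ^ 2)) ≤ ε / κ := by
    have hlog : Real.log (κ / ε) ≤ b / κ ^ 2 := by
      rw [le_div_iff₀ (by positivity)]
      linarith [hb]
    have : Real.exp (-(b / κ ^ 2)) ≤ Real.exp (-Real.log (κ / ε)) :=
      Real.exp_le_exp.mpr (by linarith)
    have heq : Real.exp (-Real.log (κ / ε)) = ε / κ := by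
      rw [Real.exp_neg, Real.exp_log (by positivity)]
      field_simp
    linarith [heq ▸ this]
  have hinv : 1 / |x| ≤ κ := by
    rw [div_le_iff₀ hxpos]
    calc (1:ℝ) = κ * (1/κ) := by field_simp
    _ ≤ κ * |x| := by
        exact mul_le_mul_of_nonneg_left hx1 (le_of_lt hκ0)
  calc (1 - x ^ 2) ^ b / |x| = (1 - x ^ 2) ^ b * (1 / |x|) := by ring
  _ ≤ Real.exp (-(b / κ ^ 2)) * κ := by
      apply mul_le_mul (le_trans step1 step2) hinv (by positivity)
      positivity
  _ ≤ (ε / κ) * κ := by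
      exact mul_le_mul_of_nonneg_right step3 (le_of_lt hκ0)
  _ = ε := by field_simp
end

section
/- For every natural number b ≥ 1 and every real x, the polynomial identity 1 − (1 − x²)^b = 4 Σ_{j=0}^{b−1} (−1)^j [2^{−2b} Σ_{i=j+1}^{b} C(2b, b+i)] · x · T_{2j+1}(x) holds, where T_m denotes the m-th Chebyshev polynomial of the first kind and C(·, ·) denotes the binomial coefficient. -/
/-!
If `uv = 1` then `u (2 + u + v) = (u + 1)²`, so the binomial theorem, folded around its middle
term, gives `(2 + u + v)ᵇ = C(2b, b) + ∑_{i=1}^b C(2b, b+i) (uⁱ + vⁱ)`. At `u = v = 1` this is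
`4ᵇ = C(2b, b) + 2 ∑_{i=1}^b C(2b, b+i)`. Over `ℂ` every `y` is `u + v` with `uv = 1`, and then
`uⁱ + vⁱ = Cᵢ(y)` is the Vieta–Lucas polynomial. Replacing `u, v` by `-u, -v` and taking
`y = 4x² - 2`, for which `Cᵢ(y) = 2T₂ᵢ(x)`, gives
`(4 - 4x²)ᵇ = C(2b, b) + 2 ∑_{i=1}^b (-1)ⁱ C(2b, b+i) T₂ᵢ(x)`.
Subtracting, `4ᵇ (1 - (1 - x²)ᵇ) = 2 ∑_{i=1}^b C(2b, b+i) (1 - (-1)ⁱ T₂ᵢ(x))`. Finally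
`2x T₂ⱼ₊₁ = T₂ⱼ₊₂ + T₂ⱼ` makes `1 - (-1)ⁱ T₂ᵢ(x) = 2 ∑_{j<i} (-1)ʲ x T₂ⱼ₊₁(x)` a telescoping sum,
and exchanging the two summations gives the identity.
-/

open Polynomial Finset

theorem sum_range_two_mul_add_one_eq_add_sum_Icc {M : Type*} [AddCommMonoid M] (f : ℕ → M)
    (n : ℕ) :
    ∑ k ∈ range (2 * n + 1), f k = f n + ∑ i ∈ Icc 1 n, (f (n + i) + f (n - i)) := by
  rw [show 2 * n + 1 = n + 1 + n by ring, sum_range_add, sum_range_succ, ← sum_range_reflect,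
    ← Ico_add_one_right_eq_Icc, sum_Ico_eq_sum_range, add_tsub_cancel_right, sum_add_distrib,
    add_comm _ (f n), add_assoc, add_comm (∑ j ∈ range n, f (n - 1 - j))]
  congr 2 <;> refine sum_congr rfl fun i _ => congrArg f ?_ <;> omega

theorem two_add_add_pow_of_mul_eq_one {R : Type*} [CommRing R] {u v : R} (huv : u * v = 1)
    (n : ℕ) :
    (2 + u + v) ^ n =
      (2 * n).choose n + ∑ i ∈ Icc 1 n, ((2 * n).choose (n + i) : R) * (u ^ i + v ^ i) := by
  have hsq : u * (2 + u + v) = (u + 1) ^ 2 := by linear_combination huv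
  have hbinom : u ^ n * (2 + u + v) ^ n
      = ∑ k ∈ range (2 * n + 1), ((2 * n).choose k : R) * u ^ k := by
    rw [← mul_pow, hsq, ← pow_mul, add_pow]
    exact sum_congr rfl fun k _ => by rw [one_pow, mul_one, mul_comm]
  have hcancel : v ^ n * u ^ n = 1 := by rw [← mul_pow, mul_comm v, huv, one_pow]
  have hup (i : ℕ) : v ^ n * u ^ (n + i) = u ^ i := by
    rw [pow_add, ← mul_assoc, hcancel, one_mul]
  have hdown {i : ℕ} (hi : i ≤ n) : v ^ n * u ^ (n - i) = v ^ i := by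
    rw [← pow_sub_mul_pow v hi, mul_right_comm, ← mul_pow, mul_comm v, huv, one_pow, one_mul]
  calc (2 + u + v) ^ n = v ^ n * (u ^ n * (2 + u + v) ^ n) := by rw [← mul_assoc, hcancel, one_mul]
    _ = _ := by
      rw [hbinom, sum_range_two_mul_add_one_eq_add_sum_Icc, mul_add, mul_sum, mul_left_comm,
        hcancel, mul_one]
      refine congrArg _ (sum_congr rfl fun i hi => ?_)
      have hin : i ≤ n := (mem_Icc.mp hi).2
      rw [Nat.choose_symm_of_eq_add (show 2 * n = (n - i) + (n + i) by omega), mul_add,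
        mul_left_comm, mul_left_comm (v ^ n), hup, hdown hin, mul_add]

theorem four_pow_eq_choose_add_two_mul_sum_choose {R : Type*} [CommRing R] (n : ℕ) :
    (4 : R) ^ n = (2 * n).choose n + 2 * ∑ i ∈ Icc 1 n, ((2 * n).choose (n + i) : R) := by
  simpa [mul_sum, mul_comm, one_add_one_eq_two, show (2 : R) + 1 + 1 = 4 by norm_num]
    using two_add_add_pow_of_mul_eq_one (one_mul (1 : R)) n

theorem sum_range_neg_one_pow_mul_succ_add {R : Type*} [CommRing R] (t : ℕ → R) (n : ℕ) :
    ∑ j ∈ range n, (-1) ^ j * (t (j + 1) + t j) = t 0 - (-1) ^ n * t n := by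
  induction n with
  | zero => simp
  | succ n ih => rw [sum_range_succ, ih, pow_succ]; ring

theorem sum_range_neg_one_pow_mul_tail_sum_mul_succ_add {R : Type*} [CommRing R] (c t : ℕ → R)
    (n : ℕ) :
    ∑ j ∈ range n, (-1) ^ j * (∑ i ∈ Icc (j + 1) n, c i) * (t (j + 1) + t j) =
      ∑ i ∈ Icc 1 n, c i * (t 0 - (-1) ^ i * t i) := by
  simp_rw [← sum_range_neg_one_pow_mul_succ_add t, mul_sum, sum_mul]
  refine (sum_comm' fun j i => ?_).trans
    (sum_congr rfl fun i _ => sum_congr rfl fun j _ => by ring)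
  simp only [mem_range, mem_Icc]
  omega

theorem IsAlgClosed.exists_mul_eq_one_and_add_eq {k : Type*} [Field k] [IsAlgClosed k] (y : k) :
    ∃ u v : k, u * v = 1 ∧ u + v = y := by
  obtain ⟨u, hu⟩ := IsAlgClosed.exists_root (X ^ 2 - Polynomial.C y * X + 1 : k[X])
    (ne_of_eq_of_ne (by compute_degree!) two_ne_zero)
  refine ⟨u, y - u, ?_, add_sub_cancel u y⟩
  simp only [IsRoot, eval_add, eval_sub, eval_pow, eval_mul, eval_X, eval_C, eval_one] at hu
  linear_combination -hu

namespace Polynomial.Chebyshev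

theorem C_eval_add_of_mul_eq_one {R : Type*} [CommRing R] {u v : R} (huv : u * v = 1) (n : ℕ) :
    (C R n).eval (u + v) = u ^ n + v ^ n := by
  rw [← dickson_one_one_eq_chebyshev_C, dickson_one_one_eval_add_inv u v huv]

theorem C_eval_four_mul_sq_sub_two {R : Type*} [CommRing R] (x : R) (n : ℤ) :
    (C R n).eval (4 * x ^ 2 - 2) = 2 * (T R (2 * n)).eval x := by
  have h := congrArg (eval x) (C_comp_two_mul_X R (n * 2))
  rw [C_mul, comp_assoc, eval_comp, C_two] at h
  simpa [mul_comm n, mul_pow, show (2 : R) ^ 2 = 4 by norm_num] using h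

theorem two_mul_mul_T_eval {R : Type*} [CommRing R] (x : R) (n : ℤ) :
    2 * x * (T R n).eval x = (T R (n + 1)).eval x + (T R (n - 1)).eval x := by
  simpa [mul_right_comm] using congrArg (eval x) (T_mul_T R n 1)

theorem two_sub_pow_eq_sum_C_eval {k : Type*} [Field k] [IsAlgClosed k] (y : k) (n : ℕ) :
    (2 - y) ^ n = (2 * n).choose n +
      ∑ i ∈ Icc 1 n, (-1) ^ i * ((2 * n).choose (n + i) : k) * (C k i).eval y := by
  obtain ⟨u, v, huv, rfl⟩ := IsAlgClosed.exists_mul_eq_one_and_add_eq y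
  rw [show 2 - (u + v) = 2 + -u + -v by ring,
    two_add_add_pow_of_mul_eq_one (by rwa [neg_mul_neg]) n]
  refine congrArg _ (sum_congr rfl fun i _ => ?_)
  rw [C_eval_add_of_mul_eq_one huv, neg_pow u, neg_pow v]
  ring

theorem four_sub_four_mul_sq_pow_eq_sum_T_eval (x : ℝ) (n : ℕ) :
    (4 - 4 * x ^ 2) ^ n = (2 * n).choose n +
      2 * ∑ i ∈ Icc 1 n, (-1) ^ i * ((2 * n).choose (n + i) : ℝ) * (T ℝ (2 * i)).eval x := by
  apply Complex.ofReal_injective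
  push_cast
  rw [show (4 : ℂ) - 4 * x ^ 2 = 2 - (4 * x ^ 2 - 2) by ring, two_sub_pow_eq_sum_C_eval, mul_sum]
  refine congrArg _ (sum_congr rfl fun i _ => ?_)
  rw [C_eval_four_mul_sq_sub_two]
  ring

end Polynomial.Chebyshev

theorem one_sub_pow_eq_chebyshev_sum_general (b : ℕ) (x : ℝ) :
    1 - (1 - x ^ 2) ^ b =
      4 * ∑ j ∈ Finset.range b, (-1 : ℝ) ^ j *
        ((2 : ℝ) ^ (-(2 * (b : ℤ))) * ∑ i ∈ Finset.Icc (j + 1) b, ((2 * b).choose (b + i) : ℝ)) *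
        (x * (Polynomial.Chebyshev.T ℝ (2 * (j : ℤ) + 1)).eval x) := by
  have hodd (j : ℕ) : x * (Chebyshev.T ℝ (2 * (j : ℤ) + 1)).eval x =
      ((Chebyshev.T ℝ (2 * (j + 1 : ℕ))).eval x + (Chebyshev.T ℝ (2 * (j : ℕ))).eval x) / 2 := by
    rw [eq_div_iff two_ne_zero, mul_comm, ← mul_assoc, Chebyshev.two_mul_mul_T_eval,
      add_sub_cancel_right, add_assoc, one_add_one_eq_two, Nat.cast_succ, mul_add_one]
  have hcentral := four_pow_eq_choose_add_two_mul_sum_choose (R := ℝ) b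
  have hpow := Chebyshev.four_sub_four_mul_sq_pow_eq_sum_T_eval x b
  rw [show (4 : ℝ) - 4 * x ^ 2 = 4 * (1 - x ^ 2) by ring, mul_pow] at hpow
  have hsum := sum_range_neg_one_pow_mul_tail_sum_mul_succ_add
    (fun i => ((2 * b).choose (b + i) : ℝ)) (fun j => (Chebyshev.T ℝ (2 * (j : ℕ))).eval x) b
  simp only [Nat.cast_zero, mul_zero, Chebyshev.T_zero, eval_one, mul_sub, mul_one,
    sum_sub_distrib, mul_left_comm _ ((-1 : ℝ) ^ _), ← mul_assoc] at hsum
  have hscale : (2 : ℝ) ^ (-(2 * (b : ℤ))) = ((4 : ℝ) ^ b)⁻¹ := by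
    rw [zpow_neg, zpow_mul, zpow_natCast]; norm_num
  calc 1 - (1 - x ^ 2) ^ b
      = 2 * ((4 : ℝ) ^ b)⁻¹ * (∑ i ∈ Icc 1 b, ((2 * b).choose (b + i) : ℝ) -
          ∑ i ∈ Icc 1 b, (-1) ^ i * ((2 * b).choose (b + i) : ℝ) *
            (Chebyshev.T ℝ (2 * (i : ℕ))).eval x) := by
        field_simp
        linear_combination hcentral - hpow
    _ = _ := by
        rw [← hsum, hscale, mul_sum, mul_sum]
        exact sum_congr rfl fun j _ => by rw [hodd]; ring

/-- Chebyshev expansion identity: for `b ≥ 1` and all real `x`,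
`1 - (1 - x²)^b = 4 Σ_{j=0}^{b-1} (-1)^j [2^{-2b} Σ_{i=j+1}^{b} C(2b, b+i)] · x · T_{2j+1}(x)`,
where `T_m` is the `m`-th Chebyshev polynomial of the first kind. -/
theorem one_sub_pow_eq_chebyshev_sum (b : ℕ) (hb : 1 ≤ b) (x : ℝ) :
    1 - (1 - x ^ 2) ^ b =
      4 * ∑ j ∈ Finset.range b, (-1 : ℝ) ^ j *
        ((2 : ℝ) ^ (-(2 * (b : ℤ))) * ∑ i ∈ Finset.Icc (j + 1) b, ((2 * b).choose (b + i) : ℝ)) *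
        (x * (Polynomial.Chebyshev.T ℝ (2 * (j : ℤ) + 1)).eval x) :=
  one_sub_pow_eq_chebyshev_sum_general b x
end

section
/- Let κ > 1 and ε ∈ (0, 1/2). Set b = ⌈κ² log(κ/ε)⌉ and d = ⌈√(b · log(4b/ε))⌉, and define the odd polynomial P(x) = 4 Σ_{j=0}^{d} (−1)^j [2^{−2b} Σ_{i=j+1}^{b} C(2b, b+i)] T_{2j+1}(x), where T_m is the m-th Chebyshev polynomial of the first kind. Then for every real x with 1/κ ≤ |x| ≤ 1, |P(x) − 1/x| ≤ 2ε. -/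
open Polynomial Finset Real

/-!
Put `x = cos θ`. Expanding `(e^{iθ} - e^{-iθ})^{2b}` gives the power-reduction formula
`4^b sin^{2b} θ = C(2b, b) + 2 ∑_{k=1}^{b} (-1)^k C(2b, b+k) cos 2kθ`; combined with
`2 cos (2j+1)θ · cos θ = cos 2jθ + cos 2(j+1)θ` and an exchange of summations, it shows that the
untruncated series (all `j < b`) times `x` is exactly `1 - (1 - x²)^b`. So that series differs from
`1/x` by `(1 - x²)^b / |x| ≤ κ e^{-b/κ²} ≤ ε`, by the choice of `b`. The coefficients are binomial
tails, and the Chernoff bound `∑_{i ≥ m} C(2b, b+i) ≤ 4^b e^{-m²/b}` with `m > d` makes each of the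
at most `b` discarded terms smaller than `ε / b`, by the choice of `d`.
-/

lemma sum_range_two_mul_add_one_eq {M : Type*} [AddCommMonoid M] (f : ℕ → M) (b : ℕ) :
    ∑ k ∈ range (2 * b + 1), f k = f b + ∑ m ∈ Icc 1 b, (f (b - m) + f (b + m)) := by
  rw [show 2 * b + 1 = (b + 1) + b by ring, sum_range_add, sum_range_succ, ← sum_range_reflect,
    add_comm (∑ _ ∈ _, _) (f b), add_assoc, ← sum_add_distrib, ← Ico_add_one_right_eq_Icc,
    sum_Ico_eq_sum_range, add_tsub_cancel_right]
  congr 1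
  refine sum_congr rfl fun m _ => ?_
  congr 2 <;> omega

lemma four_pow_mul_sin_pow_two_mul (b : ℕ) (θ : ℝ) :
    4 ^ b * sin θ ^ (2 * b) = (2 * b).choose b +
      2 * ∑ k ∈ Icc 1 b, (-1) ^ k * ((2 * b).choose (b + k) : ℝ) * cos (2 * k * θ) := by
  open Complex in
  set f : ℕ → ℂ := fun k => (-1) ^ k * (2 * b).choose k * exp (2 * (b - k) * θ * I)
  -- `(2i sin θ)^(2b) = (e^{iθ} - e^{-iθ})^(2b)`, expanded by the binomial theorem
  have binomial : (-4 : ℂ) ^ b * Complex.sin θ ^ (2 * b) = ∑ k ∈ range (2 * b + 1), f k := by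
    have h : -4 * Complex.sin θ ^ 2 =
        (-Complex.exp (-θ * Complex.I) + Complex.exp (θ * Complex.I)) ^ 2 := by
      rw [Complex.sin]
      linear_combination
        (-(Complex.exp (-θ * Complex.I) - Complex.exp (θ * Complex.I)) ^ 2) * Complex.I_sq
    rw [pow_mul, ← mul_pow, h, ← pow_mul, add_pow]
    refine sum_congr rfl fun k hk => ?_
    have hk : k ≤ 2 * b := Nat.lt_succ_iff.mp (mem_range.mp hk)
    rw [neg_pow, ← Complex.exp_nat_mul, ← Complex.exp_nat_mul]
    simp only [f]
    rw [show 2 * ((b : ℂ) - k) * θ * Complex.I =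
        k * (-θ * Complex.I) + (2 * b - k : ℕ) * (θ * Complex.I) by
      push_cast [Nat.cast_sub hk]; ring, Complex.exp_add]
    ring
  have center : f b = (-1) ^ b * (2 * b).choose b := by simp [f]
  have pair (m : ℕ) (hm : m ≤ b) : f (b - m) + f (b + m) =
      (-1) ^ b * (2 * ((-1) ^ m * (2 * b).choose (b + m) * Complex.cos (2 * m * θ))) := by
    obtain ⟨p, rfl⟩ := Nat.exists_eq_add_of_le hm
    simp only [f, Complex.cos]
    rw [Nat.add_sub_cancel_left,
      Nat.choose_symm_of_eq_add (by omega : 2 * (m + p) = p + (m + p + m))]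
    push_cast
    ring_nf
    simp only [pow_mul', neg_one_sq, one_pow]
    ring
  apply Complex.ofReal_injective
  refine mul_left_cancel₀ (pow_ne_zero b (by norm_num : (-1 : ℂ) ≠ 0)) ?_
  push_cast
  rw [← mul_assoc, ← mul_pow, show (-1 : ℂ) * 4 = -4 by norm_num, binomial,
    sum_range_two_mul_add_one_eq, center, sum_congr rfl fun m hm => pair m (mem_Icc.mp hm).2,
    ← mul_sum, ← mul_sum, ← mul_add]

lemma centralBinom_add_two_mul_sum_choose (b : ℕ) :
    ((2 * b).choose b : ℝ) + 2 * ∑ i ∈ Icc 1 b, ((2 * b).choose (b + i) : ℝ) = 4 ^ b := by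
  have h := four_pow_mul_sin_pow_two_mul b (π / 2)
  rw [sin_pi_div_two, one_pow, mul_one] at h
  rw [h]
  congr 2
  refine sum_congr rfl fun k _ => ?_
  rw [show 2 * (k : ℝ) * (π / 2) = k * π by ring, cos_nat_mul_pi, mul_right_comm, ← mul_pow]
  simp

lemma sum_neg_one_pow_mul_tail_mul_add {R : Type*} [CommRing R] (a c : ℕ → R) (n : ℕ) :
    ∑ j ∈ range n, (-1) ^ j * (∑ i ∈ Icc (j + 1) n, a i) * (c j + c (j + 1)) =
      ∑ i ∈ Icc 1 n, a i * (c 0 - (-1) ^ i * c i) := by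
  -- after exchanging the two sums, the coefficient of `a i` telescopes
  have telescope (i : ℕ) :
      ∑ j ∈ range i, (-1) ^ j * (c j + c (j + 1)) = c 0 - (-1) ^ i * c i := by
    induction i with
    | zero => simp
    | succ i ih => rw [sum_range_succ, ih]; ring
  simp_rw [mul_comm _ (∑ i ∈ Icc _ n, a i), sum_mul, mul_assoc]
  rw [sum_comm' (t' := Icc 1 n) (s' := fun i => range i)
    (h := by intro j i; simp only [mem_range, mem_Icc]; omega)]
  simp_rw [← mul_sum, telescope]

def binomTail (b j : ℕ) : ℝ := ∑ i ∈ Icc (j + 1) b, ((2 * b).choose (b + i) : ℝ)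

lemma binomTail_nonneg (b j : ℕ) : 0 ≤ binomTail b j :=
  sum_nonneg fun _ _ => by positivity

/-- `chebApprox b (d + 1)` is the polynomial `P` of the theorem. Since `binomTail b j = 0` for
`j ≥ b`, `chebApprox b b` is the complete Chebyshev expansion of `(1 - (1 - x²) ^ b) / x`. -/
noncomputable def chebApprox (b n : ℕ) (x : ℝ) : ℝ :=
  4 * ∑ j ∈ range n, (-1 : ℝ) ^ j * ((2 : ℝ) ^ (-(2 * (b : ℤ))) * binomTail b j) *
    (Chebyshev.T ℝ (2 * (j : ℤ) + 1)).eval x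

lemma chebApprox_cos (b n : ℕ) (θ : ℝ) :
    chebApprox b n (cos θ) =
      4 / 4 ^ b * ∑ j ∈ range n, (-1) ^ j * binomTail b j * cos ((2 * j + 1) * θ) := by
  have h4 : (2 : ℝ) ^ (-(2 * (b : ℤ))) = (4 ^ b)⁻¹ := by
    rw [zpow_neg, zpow_mul]
    norm_num
  simp only [chebApprox, Chebyshev.T_real_cos, h4, mul_sum, div_eq_mul_inv]
  refine sum_congr rfl fun j _ => ?_
  push_cast
  ring

lemma chebApprox_self_cos_mul_cos (b : ℕ) (θ : ℝ) :
    chebApprox b b (cos θ) * cos θ = 1 - sin θ ^ (2 * b) := by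
  set c : ℕ → ℝ := fun k => cos (2 * k * θ)
  have product (j : ℕ) : cos ((2 * j + 1) * θ) * cos θ = (c j + c (j + 1)) / 2 := by
    simp only [c]
    rw [show 2 * (j : ℝ) * θ = (2 * j + 1) * θ - θ by ring,
      show 2 * ((j + 1 : ℕ) : ℝ) * θ = (2 * j + 1) * θ + θ by push_cast; ring,
      cos_sub, cos_add]
    ring
  have reduction := four_pow_mul_sin_pow_two_mul b θ
  have total := centralBinom_add_two_mul_sum_choose b
  calc chebApprox b b (cos θ) * cos θ
      = 2 / 4 ^ b * ∑ j ∈ range b, (-1) ^ j * binomTail b j * (c j + c (j + 1)) := by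
        rw [chebApprox_cos, mul_assoc, sum_mul, mul_sum, mul_sum]
        refine sum_congr rfl fun j _ => ?_
        rw [mul_assoc _ (cos _), product]
        ring
    _ = 2 / 4 ^ b * (∑ i ∈ Icc 1 b, ((2 * b).choose (b + i) : ℝ) -
          ∑ i ∈ Icc 1 b, (-1) ^ i * ((2 * b).choose (b + i) : ℝ) * cos (2 * i * θ)) := by
        simp only [binomTail, sum_neg_one_pow_mul_tail_mul_add, ← sum_sub_distrib]
        congr 1
        refine sum_congr rfl fun i _ => ?_
        simp only [c, CharP.cast_eq_zero, mul_zero, zero_mul, cos_zero]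
        ring
    _ = 1 - sin θ ^ (2 * b) := by
        field_simp
        linear_combination reduction + total

lemma chebApprox_self_mul_self (b : ℕ) {x : ℝ} (hx : |x| ≤ 1) :
    chebApprox b b x * x = 1 - (1 - x ^ 2) ^ b := by
  obtain ⟨hx₁, hx₂⟩ := abs_le.mp hx
  rw [← cos_arccos hx₁ hx₂, chebApprox_self_cos_mul_cos, pow_mul, sin_sq]

lemma abs_chebApprox_self_sub_inv_le (b : ℕ) {κ x : ℝ} (hκ : 0 < κ) (hx₁ : 1 / κ ≤ |x|)
    (hx₂ : |x| ≤ 1) : |chebApprox b b x - 1 / x| ≤ κ * exp (-b / κ ^ 2) := by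
  have hx0 : 0 < |x| := (by positivity : (0 : ℝ) < 1 / κ).trans_le hx₁
  have hsq : 1 / κ ^ 2 ≤ x ^ 2 := by
    rw [← sq_abs x, one_div, ← inv_pow, ← one_div]
    exact pow_le_pow_left₀ (by positivity) hx₁ 2
  have hx21 : x ^ 2 ≤ 1 := by rw [← sq_abs]; nlinarith [abs_nonneg x]
  have remainder : chebApprox b b x - 1 / x = -(1 - x ^ 2) ^ b / x := by
    field_simp [abs_pos.mp hx0]
    linear_combination chebApprox_self_mul_self b hx₂
  have base : 1 - x ^ 2 ≤ exp (-(1 / κ ^ 2)) :=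
    (one_sub_le_exp_neg _).trans (exp_le_exp.mpr (by linarith))
  have hpow : (1 - x ^ 2) ^ b ≤ exp (-b / κ ^ 2) := by
    have := pow_le_pow_left₀ (by linarith) base b
    rwa [← exp_nat_mul, mul_neg, mul_one_div, ← neg_div] at this
  rw [remainder, abs_div, abs_neg, abs_of_nonneg (pow_nonneg (by linarith) b), div_le_iff₀ hx0]
  calc (1 - x ^ 2) ^ b ≤ exp (-b / κ ^ 2) := hpow
    _ = κ * exp (-b / κ ^ 2) * (1 / κ) := by field_simp
    _ ≤ κ * exp (-b / κ ^ 2) * |x| := by gcongr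

lemma sum_Icc_choose_mul_pow_le (n m : ℕ) {y : ℝ} (hy : 1 ≤ y) :
    (∑ k ∈ Icc m n, (n.choose k : ℝ)) * y ^ m ≤ (1 + y) ^ n := by
  calc (∑ k ∈ Icc m n, (n.choose k : ℝ)) * y ^ m
      ≤ ∑ k ∈ Icc m n, (n.choose k : ℝ) * y ^ k := by
        rw [sum_mul]
        exact sum_le_sum fun k hk => by gcongr; exact (mem_Icc.mp hk).1
    _ ≤ ∑ k ∈ range (n + 1), (n.choose k : ℝ) * y ^ k :=
        sum_le_sum_of_subset_of_nonneg
          (fun k hk => by simp only [mem_Icc, mem_range] at hk ⊢; omega)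
          fun _ _ _ => by positivity
    _ = (1 + y) ^ n := by
        rw [add_comm 1 y, add_pow]
        simp [mul_comm]

lemma binomTail_eq_sum_Icc (b j : ℕ) :
    binomTail b j = ∑ k ∈ Icc (b + (j + 1)) (2 * b), ((2 * b).choose k : ℝ) := by
  rw [binomTail, two_mul, ← map_add_left_Icc, sum_map]
  rfl

lemma one_add_exp_two_mul_le (t : ℝ) : 1 + exp (2 * t) ≤ 2 * exp (t + t ^ 2 / 2) := by
  have h := cosh_le_exp_half_sq t
  rw [cosh_eq] at h
  have : 1 + exp (2 * t) = exp t * (exp t + exp (-t)) := by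
    rw [mul_add, ← exp_add, ← exp_add, add_neg_cancel, exp_zero, ← two_mul, add_comm]
  rw [this, exp_add]
  nlinarith [exp_pos t]

lemma binomTail_le {b m : ℕ} (hb : 0 < b) {j : ℕ} (hm : m ≤ j + 1) :
    binomTail b j ≤ 4 ^ b * exp (-(m : ℝ) ^ 2 / b) := by
  -- Chernoff: weight the tail by `y ^ k` with `y = exp (2m / b)`, then use
  -- `cosh t ≤ exp (t² / 2)`
  set t : ℝ := m / b
  set y := exp (2 * t)
  have hy : 1 ≤ y := one_le_exp (by positivity)
  have chernoff := sum_Icc_choose_mul_pow_le (2 * b) (b + (j + 1)) hy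
  rw [← binomTail_eq_sum_Icc] at chernoff
  have key : binomTail b j * y ^ (b + m) ≤ 4 ^ b * exp (-(m : ℝ) ^ 2 / b) * y ^ (b + m) :=
    calc binomTail b j * y ^ (b + m) ≤ binomTail b j * y ^ (b + (j + 1)) := by
          gcongr
          exact binomTail_nonneg b j
      _ ≤ (1 + y) ^ (2 * b) := chernoff
      _ ≤ (2 * exp (t + t ^ 2 / 2)) ^ (2 * b) := by
          gcongr
          exact one_add_exp_two_mul_le t
      _ = 4 ^ b * exp (-(m : ℝ) ^ 2 / b) * y ^ (b + m) := by
          rw [mul_pow, pow_mul, ← exp_nat_mul, ← exp_nat_mul, mul_assoc, ← exp_add]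
          norm_num
          simp only [t]
          field_simp
          ring
  exact le_of_mul_le_mul_right key (by positivity)

lemma abs_sum_range_sub_sum_range_le {g : ℕ → ℝ} {b n : ℕ} {B : ℝ}
    (hg : ∀ j, b ≤ j → g j = 0) (hB : ∀ j, n ≤ j → |g j| ≤ B) :
    |∑ j ∈ range b, g j - ∑ j ∈ range n, g j| ≤ b * B := by
  have hB0 : 0 ≤ B := (abs_nonneg _).trans (hB n le_rfl)
  rcases le_total n b with hnb | hbn
  · rw [← sum_Ico_eq_sub _ hnb]
    calc |∑ j ∈ Ico n b, g j| ≤ ∑ j ∈ Ico n b, |g j| := abs_sum_le_sum_abs _ _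
      _ ≤ #(Ico n b) • B := sum_le_card_nsmul _ _ _ fun j hj => hB j (mem_Ico.mp hj).1
      _ ≤ b * B := by
          rw [Nat.card_Ico, nsmul_eq_mul]
          gcongr
          exact_mod_cast Nat.sub_le b n
  · rw [← sum_range_add_sum_Ico _ hbn, sum_eq_zero fun j hj => hg j (mem_Ico.mp hj).1]
    simpa using mul_nonneg (Nat.cast_nonneg b) hB0

lemma abs_chebApprox_sub_le {b : ℕ} (hb : 0 < b) (n : ℕ) {x : ℝ} (hx : |x| ≤ 1) :
    |chebApprox b b x - chebApprox b n x| ≤ 4 * b * exp (-(n : ℝ) ^ 2 / b) := by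
  obtain ⟨hx₁, hx₂⟩ := abs_le.mp hx
  rw [← cos_arccos hx₁ hx₂, chebApprox_cos, chebApprox_cos, ← mul_sub, abs_mul,
    abs_of_pos (by positivity)]
  set θ := arccos x
  have tail := abs_sum_range_sub_sum_range_le (b := b) (n := n)
    (g := fun j => (-1) ^ j * binomTail b j * cos ((2 * j + 1) * θ))
    (B := 4 ^ b * exp (-(n : ℝ) ^ 2 / b)) (fun j hj => by simp [binomTail, hj])
    (fun j hj => by
      rw [abs_mul, abs_mul, abs_pow, abs_neg, abs_one, one_pow, one_mul,
        abs_of_nonneg (binomTail_nonneg b j)]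
      calc binomTail b j * |cos _| ≤ binomTail b j * 1 := by
            gcongr
            exacts [binomTail_nonneg b j, abs_cos_le_one _]
        _ ≤ _ := by rw [mul_one]; exact binomTail_le hb (by omega))
  calc 4 / 4 ^ b * |_| ≤ 4 / 4 ^ b * (b * (4 ^ b * exp (-(n : ℝ) ^ 2 / b))) := by gcongr
    _ = 4 * b * exp (-(n : ℝ) ^ 2 / b) := by field_simp

lemma mul_exp_neg_div_le {M ε a c : ℝ} (hM : 0 < M) (hε : 0 < ε) (hc : 0 < c)
    (h : c * Real.log (M / ε) ≤ a) : M * exp (-a / c) ≤ ε := by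
  have : exp (-a / c) ≤ ε / M := by
    rw [← inv_div M ε, ← exp_log (div_pos hM hε), ← exp_neg, exp_le_exp, neg_div,
      neg_le_neg_iff, le_div_iff₀ hc]
    linarith
  calc M * exp (-a / c) ≤ M * (ε / M) := by gcongr
    _ = ε := by field_simp

/-- Truncated Chebyshev approximation of `1/x`: for `κ > 1`, `ε ∈ (0, 1/2)`,
`b = ⌈κ² log(κ/ε)⌉` and `d = ⌈√(b log(4b/ε))⌉`, the odd polynomial
`P(x) = 4 Σ_{j=0}^{d} (-1)^j [2^{-2b} Σ_{i=j+1}^{b} C(2b, b+i)] T_{2j+1}(x)`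
satisfies `|P(x) - 1/x| ≤ 2ε` for all `1/κ ≤ |x| ≤ 1`. -/
theorem truncated_chebyshev_inverse_approx (κ ε : ℝ) (hκ : 1 < κ)
    (hε : ε ∈ Set.Ioo (0 : ℝ) (1 / 2))
    (b d : ℕ) (hb : b = ⌈κ ^ 2 * Real.log (κ / ε)⌉₊)
    (hd : d = ⌈Real.sqrt ((b : ℝ) * Real.log (4 * (b : ℝ) / ε))⌉₊)
    (P : ℝ → ℝ)
    (hP : ∀ x : ℝ, P x =
      4 * ∑ j ∈ Finset.range (d + 1), (-1 : ℝ) ^ j *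
        ((2 : ℝ) ^ (-(2 * (b : ℤ))) * ∑ i ∈ Finset.Icc (j + 1) b, ((2 * b).choose (b + i) : ℝ)) *
        (Polynomial.Chebyshev.T ℝ (2 * (j : ℤ) + 1)).eval x) :
    ∀ x : ℝ, 1 / κ ≤ |x| → |x| ≤ 1 → |P x - 1 / x| ≤ 2 * ε := by
  intro x hx₁ hx₂
  obtain ⟨hε₀, hε₁⟩ := hε
  have hκ₀ : 0 < κ := by linarith
  have hb₀ : 0 < b := by
    rw [hb, Nat.ceil_pos]
    exact mul_pos (by positivity) (log_pos ((one_lt_div hε₀).mpr (by linarith)))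
  have untruncated : κ * exp (-b / κ ^ 2) ≤ ε :=
    mul_exp_neg_div_le hκ₀ hε₀ (by positivity) (hb ▸ Nat.le_ceil _)
  have truncation : 4 * b * exp (-((d + 1 : ℕ) : ℝ) ^ 2 / b) ≤ ε := by
    refine mul_exp_neg_div_le (by positivity) hε₀ (by positivity) ?_
    have := (sqrt_le_iff.mp (hd ▸ Nat.le_ceil _)).2
    push_cast
    nlinarith [(Nat.cast_nonneg d : (0 : ℝ) ≤ d)]
  have hPx : P x = chebApprox b (d + 1) x := by rw [hP]; rfl
  calc |P x - 1 / x|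
      = |(chebApprox b b x - 1 / x) - (chebApprox b b x - chebApprox b (d + 1) x)| := by
        rw [hPx]; ring_nf
    _ ≤ |chebApprox b b x - 1 / x| + |chebApprox b b x - chebApprox b (d + 1) x| := abs_sub _ _
    _ ≤ ε + ε :=
        add_le_add ((abs_chebApprox_self_sub_inv_le b hκ₀ hx₁ hx₂).trans untruncated)
          ((abs_chebApprox_sub_le hb₀ (d + 1) hx₂).trans truncation)
    _ = 2 * ε := by ring
end

section
/- Let A be an M×N complex matrix, α > 0 and β ≠ 0 real, and suppose A/α = Σ_{k=1}^{r} σ_k w_k v_k† where σ_k > 0, {w_k}_{k=1}^{r} is an orthonormal family in ℂ^M and {v_k}_{k=1}^{r} is an orthonormal family in ℂ^N. Let b ∈ ℂ^M lie in the span of {w_1, …, w_r}, let x = Σ_{k=1}^{r} (⟨w_k, b⟩/(α σ_k)) v_k be the exact solution of A x = b in the span of {v_k}, and suppose P: ℝ → ℝ satisfies |P(σ_k) − β/σ_k| ≤ |β| δ for every k, for some δ ≥ 0. Then the vector x̂ = (1/(αβ)) Σ_{k=1}^{r} P(σ_k) ⟨w_k, b⟩ v_k satisfies ‖x̂ − x‖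 ≤ (δ/α) ‖b‖. -/
/-!
Write `b = Σ a_k w_k`; orthonormality of the `w_k` gives `⟨w_k, b⟩ = a_k`, so
`x̂ - x = Σ e_k a_k v_k` with `e_k = P(σ_k)/(αβ) - 1/(ασ_k)`, and `|e_k| ≤ δ/α` is the hypothesis
on `P` divided by `α|β|`. Pythagoras in both orthonormal families then gives
`‖x̂ - x‖² = Σ |e_k a_k|² ≤ (δ/α)² Σ |a_k|² = (δ/α)² ‖b‖²`.
-/

open Matrix

/-- The Euclidean norm of a finite complex vector. -/
noncomputable def euclNorm {N : ℕ} (x : Fin N → ℂ) : ℝ :=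
  Real.sqrt (∑ i, ‖x i‖ ^ 2)

section Orthonormal

variable {𝕜 E F ι : Type*} [RCLike 𝕜] [Fintype ι]
  [NormedAddCommGroup E] [InnerProductSpace 𝕜 E] [NormedAddCommGroup F] [InnerProductSpace 𝕜 F]

theorem Orthonormal.norm_sum_smul_sq {v : ι → E} (hv : Orthonormal 𝕜 v) (c : ι → 𝕜) :
    ‖∑ i, c i • v i‖ ^ 2 = ∑ i, ‖c i‖ ^ 2 := by
  simpa using hv.orthogonalFamily.norm_sum c Finset.univ

theorem Orthonormal.norm_sum_smul_le_mul {v : ι → E} {w : ι → F}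
    (hv : Orthonormal 𝕜 v) (hw : Orthonormal 𝕜 w) {c a : ι → 𝕜} {K : ℝ} (hK : 0 ≤ K)
    (hca : ∀ i, ‖c i‖ ≤ K * ‖a i‖) :
    ‖∑ i, c i • v i‖ ≤ K * ‖∑ i, a i • w i‖ := by
  refine le_of_sq_le_sq ?_ (by positivity)
  calc ‖∑ i, c i • v i‖ ^ 2 = ∑ i, ‖c i‖ ^ 2 := hv.norm_sum_smul_sq c
    _ ≤ ∑ i, (K * ‖a i‖) ^ 2 := by gcongr with i; exact hca i
    _ = (K * ‖∑ i, a i • w i‖) ^ 2 := by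
      rw [mul_pow, hw.norm_sum_smul_sq, Finset.mul_sum]
      simp only [mul_pow]

end Orthonormal

theorem orthonormal_toLp_of_star_dotProduct {𝕜 ι n : Type*} [RCLike 𝕜] [DecidableEq ι]
    [Fintype n] {v : ι → n → 𝕜} (hv : ∀ k l, star (v k) ⬝ᵥ v l = if k = l then 1 else 0) :
    Orthonormal 𝕜 fun k => (WithLp.toLp 2 (v k) : EuclideanSpace 𝕜 n) := by
  refine orthonormal_iff_ite.mpr fun k l => ?_
  rw [EuclideanSpace.inner_toLp_toLp, dotProduct_comm, hv]

theorem euclNorm_eq_norm_toLp {N : ℕ} (x : Fin N → ℂ) :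
    euclNorm x = ‖(WithLp.toLp 2 x : EuclideanSpace ℂ (Fin N))‖ :=
  (EuclideanSpace.norm_eq _).symm

theorem euclNorm_sum_smul_le_mul {ι : Type*} [Fintype ι] [DecidableEq ι] {M N : ℕ}
    {v : ι → Fin N → ℂ} {w : ι → Fin M → ℂ}
    (hv : ∀ k l, star (v k) ⬝ᵥ v l = if k = l then 1 else 0)
    (hw : ∀ k l, star (w k) ⬝ᵥ w l = if k = l then 1 else 0)
    {c a : ι → ℂ} {K : ℝ} (hK : 0 ≤ K) (hca : ∀ k, ‖c k‖ ≤ K * ‖a k‖) :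
    euclNorm (∑ k, c k • v k) ≤ K * euclNorm (∑ k, a k • w k) := by
  simp only [euclNorm_eq_norm_toLp, WithLp.toLp_sum, WithLp.toLp_smul]
  exact (orthonormal_toLp_of_star_dotProduct hv).norm_sum_smul_le_mul
    (orthonormal_toLp_of_star_dotProduct hw) hK hca

theorem star_dotProduct_sum_smul {𝕜 ι n : Type*} [RCLike 𝕜] [Fintype ι] [DecidableEq ι]
    [Fintype n] {w : ι → n → 𝕜} (hw : ∀ k l, star (w k) ⬝ᵥ w l = if k = l then 1 else 0)
    (a : ι → 𝕜) (k : ι) : star (w k) ⬝ᵥ ∑ l, a l • w l = a k := by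
  simp [dotProduct_sum, dotProduct_smul, hw]

theorem abs_inv_mul_sub_inv_le {α β s p δ : ℝ} (hα : 0 < α) (hβ : β ≠ 0) (hs : s ≠ 0)
    (hp : |p - β / s| ≤ |β| * δ) : |(α * β)⁻¹ * p - (α * s)⁻¹| ≤ δ / α := by
  have hβ' : 0 < |β| := abs_pos.mpr hβ
  have hfactor : (α * β)⁻¹ * p - (α * s)⁻¹ = (p - β / s) / (α * β) := by field_simp
  calc |(α * β)⁻¹ * p - (α * s)⁻¹| = |p - β / s| / (α * |β|) := by
        rw [hfactor, abs_div, abs_mul, abs_of_pos hα]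
    _ ≤ |β| * δ / (α * |β|) := by gcongr
    _ = δ / α := by field_simp

theorem qsvt_linear_system_error_bound_general {M N r : ℕ}
    (α β : ℝ) (hα : 0 < α) (hβ : β ≠ 0)
    (σ : Fin r → ℝ) (hσ : ∀ k, 0 < σ k)
    (w : Fin r → (Fin M → ℂ)) (v : Fin r → (Fin N → ℂ))
    (hw : ∀ k l, star (w k) ⬝ᵥ w l = if k = l then 1 else 0)
    (hv : ∀ k l, star (v k) ⬝ᵥ v l = if k = l then 1 else 0)
    (b : Fin M → ℂ) (hb : b ∈ Submodule.span ℂ (Set.range w))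
    (x : Fin N → ℂ)
    (hx : x = ∑ k : Fin r, ((star (w k) ⬝ᵥ b) / ((α * σ k : ℝ) : ℂ)) • v k)
    (P : ℝ → ℝ) (δ : ℝ) (hδ : 0 ≤ δ)
    (hP : ∀ k, |P (σ k) - β / σ k| ≤ |β| * δ)
    (xhat : Fin N → ℂ)
    (hxhat : xhat = ((α * β : ℝ) : ℂ)⁻¹ •
      ∑ k : Fin r, (((P (σ k) : ℝ) : ℂ) * (star (w k) ⬝ᵥ b)) • v k) :
    euclNorm (xhat - x) ≤ (δ / α) * euclNorm b := by
  obtain ⟨a, rfl⟩ := (Submodule.mem_span_range_iff_exists_fun ℂ).mp hb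
  set e : Fin r → ℝ := fun k => (α * β)⁻¹ * P (σ k) - (α * σ k)⁻¹
  have herror : xhat - x = ∑ k, ((e k : ℂ) * a k) • v k := by
    rw [hxhat, hx, Finset.smul_sum, ← Finset.sum_sub_distrib]
    refine Finset.sum_congr rfl fun k _ => ?_
    rw [star_dotProduct_sum_smul hw, smul_smul, ← sub_smul]
    push_cast [e]
    congr 1
    ring
  rw [herror]
  refine euclNorm_sum_smul_le_mul hv hw (div_nonneg hδ hα.le) fun k => ?_
  rw [norm_mul, Complex.norm_real, Real.norm_eq_abs]
  exact mul_le_mul_of_nonneg_right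
    (abs_inv_mul_sub_inv_le hα hβ (hσ k).ne' (hP k)) (norm_nonneg _)

/-- **Error bound for the approximate QSVT solution.** If `A/α = Σ σ_k w_k v_k†` is an SVD
with `σ_k > 0`, `b` lies in the span of the `w_k`, `x` is the exact solution of `Ax = b`
in the span of the `v_k`, and `|P(σ_k) - β/σ_k| ≤ |β| δ` for all `k`, then the approximate
solution `xhat = (1/(αβ)) Σ_k P(σ_k) ⟨w_k, b⟩ v_k` satisfies `‖xhat - x‖ ≤ (δ/α) ‖b‖`. -/
theorem qsvt_linear_system_error_bound {M N r : ℕ}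
    (A : Matrix (Fin M) (Fin N) ℂ) (α β : ℝ) (hα : 0 < α) (hβ : β ≠ 0)
    (σ : Fin r → ℝ) (hσ : ∀ k, 0 < σ k)
    (w : Fin r → (Fin M → ℂ)) (v : Fin r → (Fin N → ℂ))
    (hw : ∀ k l, star (w k) ⬝ᵥ w l = if k = l then 1 else 0)
    (hv : ∀ k l, star (v k) ⬝ᵥ v l = if k = l then 1 else 0)
    (hSVD : ((α : ℂ))⁻¹ • A = ∑ k : Fin r, (σ k : ℂ) • vecMulVec (w k) (star (v k)))
    (b : Fin M → ℂ) (hb : b ∈ Submodule.span ℂ (Set.range w))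
    (x : Fin N → ℂ)
    (hx : x = ∑ k : Fin r, ((star (w k) ⬝ᵥ b) / ((α * σ k : ℝ) : ℂ)) • v k)
    (P : ℝ → ℝ) (δ : ℝ) (hδ : 0 ≤ δ)
    (hP : ∀ k, |P (σ k) - β / σ k| ≤ |β| * δ)
    (xhat : Fin N → ℂ)
    (hxhat : xhat = ((α * β : ℝ) : ℂ)⁻¹ •
      ∑ k : Fin r, (((P (σ k) : ℝ) : ℂ) * (star (w k) ⬝ᵥ b)) • v k) :
    euclNorm (xhat - x) ≤ (δ / α) * euclNorm b :=
  qsvt_linear_system_error_bound_general α β hα hβ σ hσ w v hw hv b hb x hx P δ hδ hP xhat hxhat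
end

section
/- Let N ≥ 1, λ ≥ 0, and let A be the N×N real tridiagonal matrix with A_{jj} = 1 + 2λ for all j and A_{j,j+1} = A_{j+1,j} = −λ (all other entries zero). Then for every v ∈ ℝ^N, vᵀ A v ≥ ‖v‖². Consequently A is invertible and its inverse satisfies ‖A⁻¹‖₂ ≤ 1, for every λ ≥ 0 (unconditional stability of the implicit scheme). -/
open Matrix
open scoped Matrix.Norms.L2Operator RealInnerProductSpace

/-!
Write `A = (1 + 2λ) I - λ (S + Sᵀ)` with `S` the shift matrix. Every row and every column of `S`
has at most one nonzero entry, equal to `1`, so AM–GM gives `vᵀ S v ≤ ‖v‖²` (Schur's test), whence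
`vᵀ A v ≥ ‖v‖²`. By Cauchy–Schwarz such a coercivity bound yields `‖v‖ ≤ ‖A v‖`, so `A` is
injective, hence invertible, and `‖A⁻¹ y‖ ≤ ‖A A⁻¹ y‖ = ‖y‖`.
-/

namespace Matrix

variable {n : Type*} [Fintype n]

theorem dotProduct_mulVec_le_of_sum_row_le_one_of_sum_col_le_one {S : Matrix n n ℝ}
    (hS : ∀ i j, 0 ≤ S i j) (hrow : ∀ i, ∑ j, S i j ≤ 1) (hcol : ∀ j, ∑ i, S i j ≤ 1)
    (v : n → ℝ) : v ⬝ᵥ S *ᵥ v ≤ ∑ i, v i ^ 2 := by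
  calc v ⬝ᵥ S *ᵥ v = ∑ i, ∑ j, S i j * (v i * v j) := by
        simp only [dotProduct, mulVec, Finset.mul_sum]
        exact Finset.sum_congr rfl fun i _ => Finset.sum_congr rfl fun j _ => by ring
    _ ≤ ∑ i, ∑ j, S i j * ((v i ^ 2 + v j ^ 2) / 2) := by
        gcongr with i _ j _
        · exact hS i j
        · linarith [two_mul_le_add_sq (v i) (v j)]
    _ = (∑ i, v i ^ 2 * ∑ j, S i j + ∑ j, v j ^ 2 * ∑ i, S i j) / 2 := by
        simp only [Finset.mul_sum]
        rw [Finset.sum_comm (f := fun j i => v j ^ 2 * S i j), ← Finset.sum_add_distrib,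
          Finset.sum_div]
        refine Finset.sum_congr rfl fun i _ => ?_
        rw [← Finset.sum_add_distrib, Finset.sum_div]
        exact Finset.sum_congr rfl fun j _ => by ring
    _ ≤ (∑ i, v i ^ 2 * 1 + ∑ j, v j ^ 2 * 1) / 2 := by
        gcongr with i _ j _
        · exact hrow i
        · exact hcol j
    _ = ∑ i, v i ^ 2 := by simp only [mul_one]; ring

variable [DecidableEq n]

theorem dotProduct_smul_one_sub_smul_add_transpose_mulVec (S : Matrix n n ℝ) (a b : ℝ)
    (v : n → ℝ) :
    v ⬝ᵥ (a • 1 - b • (S + Sᵀ)) *ᵥ v = a * ∑ i, v i ^ 2 - 2 * b * (v ⬝ᵥ S *ᵥ v) := by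
  simp only [sub_mulVec, smul_mulVec, add_mulVec, one_mulVec, dotProduct_sub, dotProduct_smul,
    dotProduct_add, dotProduct_transpose_mulVec, smul_eq_mul]
  simp only [dotProduct, sq]
  ring

theorem mul_norm_le_norm_toEuclideanCLM_of_coercive {A : Matrix n n ℝ} {c : ℝ}
    (hA : ∀ v : n → ℝ, c * ∑ i, v i ^ 2 ≤ v ⬝ᵥ A *ᵥ v) (x : EuclideanSpace ℝ n) :
    c * ‖x‖ ≤ ‖toEuclideanCLM (𝕜 := ℝ) A x‖ := by
  have hsq : c * ‖x‖ ^ 2 ≤ ‖x‖ * ‖toEuclideanCLM (𝕜 := ℝ) A x‖ :=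
    calc c * ‖x‖ ^ 2 ≤ x ⬝ᵥ A *ᵥ x := by rw [EuclideanSpace.real_norm_sq_eq]; exact hA x
      _ = ⟪x, toEuclideanCLM (𝕜 := ℝ) A x⟫ := (inner_toEuclideanCLM A x x).symm
      _ ≤ ‖x‖ * ‖toEuclideanCLM (𝕜 := ℝ) A x‖ := real_inner_le_norm _ _
  rcases (norm_nonneg x).eq_or_lt with hx | hx
  · rw [← hx, mul_zero]
    exact norm_nonneg _
  · nlinarith

theorem isUnit_of_coercive {A : Matrix n n ℝ} {c : ℝ} (hc : 0 < c)
    (hA : ∀ v : n → ℝ, c * ∑ i, v i ^ 2 ≤ v ⬝ᵥ A *ᵥ v) : IsUnit A := by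
  refine mulVec_injective_iff_isUnit.mp fun v w hvw => ?_
  have hker : A *ᵥ (v - w) = 0 := by rw [mulVec_sub, hvw, sub_self]
  have hsum : ∑ i, (v - w) i ^ 2 = 0 := by
    have := hA (v - w)
    rw [hker, dotProduct_zero] at this
    exact le_antisymm (nonpos_of_mul_nonpos_right this hc) (by positivity)
  ext i
  have := (Finset.sum_eq_zero_iff_of_nonneg fun j _ => sq_nonneg ((v - w) j)).mp hsum i
    (Finset.mem_univ i)
  simpa [sub_eq_zero] using this

theorem l2_opNorm_inv_le_of_coercive {A : Matrix n n ℝ} {c : ℝ} (hc : 0 < c)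
    (hA : ∀ v : n → ℝ, c * ∑ i, v i ^ 2 ≤ v ⬝ᵥ A *ᵥ v) : ‖A⁻¹‖ ≤ c⁻¹ := by
  have hinv : A * A⁻¹ = 1 :=
    mul_nonsing_inv A ((isUnit_iff_isUnit_det A).mp (isUnit_of_coercive hc hA))
  rw [← l2_opNorm_toEuclideanCLM]
  refine ContinuousLinearMap.opNorm_le_bound _ (inv_nonneg.mpr hc.le) fun y => ?_
  rw [inv_mul_eq_div, le_div_iff₀' hc]
  calc c * ‖toEuclideanCLM (𝕜 := ℝ) A⁻¹ y‖
      ≤ ‖toEuclideanCLM (𝕜 := ℝ) A (toEuclideanCLM (𝕜 := ℝ) A⁻¹ y)‖ :=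
        mul_norm_le_norm_toEuclideanCLM_of_coercive hA _
    _ = ‖y‖ := by rw [← mul_apply_eq_comp, ← map_mul, hinv, map_one]; rfl

end Matrix

def shiftMatrix (N : ℕ) : Matrix (Fin N) (Fin N) ℝ :=
  of fun i j => if (i : ℕ) + 1 = j then 1 else 0

theorem shiftMatrix_nonneg (N : ℕ) (i j : Fin N) : 0 ≤ shiftMatrix N i j := by
  simp only [shiftMatrix, of_apply]
  split_ifs <;> norm_num

theorem sum_shiftMatrix_row_le_one (N : ℕ) (i : Fin N) : ∑ j, shiftMatrix N i j ≤ 1 := by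
  simp only [shiftMatrix, of_apply, Finset.sum_boole]
  exact_mod_cast Finset.card_le_one.2 fun j hj k hk => by
    simp only [Finset.mem_filter] at hj hk
    omega

theorem sum_shiftMatrix_col_le_one (N : ℕ) (j : Fin N) : ∑ i, shiftMatrix N i j ≤ 1 := by
  simp only [shiftMatrix, of_apply, Finset.sum_boole]
  exact_mod_cast Finset.card_le_one.2 fun i hi k hk => by
    simp only [Finset.mem_filter] at hi hk
    omega

theorem dotProduct_shiftMatrix_mulVec_le (N : ℕ) (v : Fin N → ℝ) :
    v ⬝ᵥ shiftMatrix N *ᵥ v ≤ ∑ i, v i ^ 2 :=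
  dotProduct_mulVec_le_of_sum_row_le_one_of_sum_col_le_one (shiftMatrix_nonneg N)
    (sum_shiftMatrix_row_le_one N) (sum_shiftMatrix_col_le_one N) v

theorem eq_smul_one_sub_smul_shiftMatrix_add_transpose {N : ℕ} {A : Matrix (Fin N) (Fin N) ℝ}
    {a b : ℝ} (hA : ∀ i j : Fin N, A i j =
      if i = j then a
      else if (i : ℕ) + 1 = (j : ℕ) ∨ (j : ℕ) + 1 = (i : ℕ) then -b
      else 0) :
    A = a • 1 - b • (shiftMatrix N + (shiftMatrix N)ᵀ) := by
  ext i j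
  rw [hA]
  simp only [shiftMatrix, Matrix.sub_apply, Matrix.smul_apply, one_apply, Matrix.add_apply,
    transpose_apply, of_apply, smul_eq_mul]
  split_ifs <;> subst_vars <;> first | omega | simp_all

theorem implicit_scheme_unconditional_stability_general (N : ℕ) (lam : ℝ) (hlam : 0 ≤ lam)
    (A : Matrix (Fin N) (Fin N) ℝ)
    (hA : ∀ i j : Fin N, A i j =
      if i = j then 1 + 2 * lam
      else if (i : ℕ) + 1 = (j : ℕ) ∨ (j : ℕ) + 1 = (i : ℕ) then -lam
      else 0) :
    (∀ v : Fin N → ℝ, ∑ i, v i ^ 2 ≤ v ⬝ᵥ A.mulVec v) ∧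
      IsUnit A ∧ ‖A⁻¹‖ ≤ 1 := by
  have hcoercive : ∀ v : Fin N → ℝ, 1 * ∑ i, v i ^ 2 ≤ v ⬝ᵥ A *ᵥ v := fun v => by
    rw [eq_smul_one_sub_smul_shiftMatrix_add_transpose hA,
      dotProduct_smul_one_sub_smul_add_transpose_mulVec]
    nlinarith [dotProduct_shiftMatrix_mulVec_le N v]
  refine ⟨fun v => by simpa using hcoercive v, isUnit_of_coercive one_pos hcoercive, ?_⟩
  simpa using l2_opNorm_inv_le_of_coercive one_pos hcoercive

/-- **Unconditional stability of the implicit scheme for the heat equation.** Let `A` be the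
`N×N` tridiagonal matrix with diagonal entries `1 + 2λ` and off-diagonal entries `-λ`,
with `λ ≥ 0`. Then `vᵀ A v ≥ ‖v‖²` for all `v ∈ ℝ^N`; consequently `A` is invertible and
its inverse satisfies `‖A⁻¹‖₂ ≤ 1`. -/
theorem implicit_scheme_unconditional_stability (N : ℕ) (hN : 1 ≤ N) (lam : ℝ) (hlam : 0 ≤ lam)
    (A : Matrix (Fin N) (Fin N) ℝ)
    (hA : ∀ i j : Fin N, A i j =
      if i = j then 1 + 2 * lam
      else if (i : ℕ) + 1 = (j : ℕ) ∨ (j : ℕ) + 1 = (i : ℕ) then -lam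
      else 0) :
    (∀ v : Fin N → ℝ, ∑ i, v i ^ 2 ≤ v ⬝ᵥ A.mulVec v) ∧
      IsUnit A ∧ ‖A⁻¹‖ ≤ 1 :=
  implicit_scheme_unconditional_stability_general N lam hlam A hA
end
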